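/- Let d ≥ 1, k ≥ 2, C > 0, Δ̄ ∈ (0,1), let y_1,…,y_{k₀} ∈ ℝ^d, let (w_1,…,w_{k₀}) be a probability vector, and let B ⊆ ℝ^d be the Euclidean ball of radius (√(C ln k)+√d)/Δ̄ centered at 0. Then for every x ∈ ℝ^d, | Σ_{j=1}^{k₀} w_j γ_{Δ̄}(x − y_j) − (2π)^{-d} Σ_{j=1}^{k₀} w_j ∫_B e^{-Δ̄²‖z‖²/2} e^{i⟨x − y_j, z⟩} dz | ≤ (2π)^{-d} ∫_{ℝ^d ∖ B} e^{-Δ̄²‖z‖²/2} dz ≤ (2πΔ̄²)^{-d/2}·k^{-C/2}. -/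

import Mathlib

/-
Fourier inversion for the Gaussian writes `γ_Δ(u) = (2π)^(-d) ∫ e^(-Δ²‖z‖²/2) e^(i⟨u,z⟩) dz`, so
truncating the integral to `B` costs at most the Gaussian mass of `Bᶜ` at every atom, and averaging
over the probability vector `w` keeps that bound. For the tail, Chernoff's trick bounds
`e^(-Δ²‖z‖²/2)` on `Bᶜ` by `e^(-(Δ²/2 - b)R²) e^(-b‖z‖²)`, whose integral is explicit; with
`R² Δ² = s := (√(C ln k) + √d)²` and `b = dΔ²/(2s)` the resulting factor `(s/d)^(d/2) e^(-(s-d)/2)`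
is at most `k^(-C/2)` by `1 + x ≤ e^x`.
-/

open MeasureTheory Real
open scoped RealInnerProductSpace

noncomputable def gaussDensity (d : ℕ) (σ : ℝ) (z : EuclideanSpace ℝ (Fin d)) : ℝ :=
  (2 * π * σ ^ 2) ^ (-(d : ℝ) / 2) * Real.exp (-‖z‖ ^ 2 / (2 * σ ^ 2))

open Metric Module Complex

theorem two_pi_rpow_neg_mul_div_rpow (n : ℝ) {t : ℝ} (ht : 0 < t) :
    (2 * π) ^ (-n) * (2 * π / t) ^ (n / 2) = (2 * π * t) ^ (-n / 2) := by
  rw [rpow_def_of_pos (by positivity), rpow_def_of_pos (by positivity),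
    rpow_def_of_pos (by positivity), ← Real.exp_add, log_div (by positivity) ht.ne',
    log_mul (by positivity) ht.ne']
  ring_nf

theorem sqrt_add_sq_div_rpow_mul_exp_le {a n : ℝ} (ha : 0 ≤ a) (hn : 0 < n) :
    ((√a + √n) ^ 2 / n) ^ (n / 2) * rexp (-((√a + √n) ^ 2 - n) / 2) ≤ rexp (-a / 2) := by
  have hsn : 0 < √n := sqrt_pos.2 hn
  have hratio : (√a + √n) ^ 2 / n = ((√a + √n) / √n) ^ (2 : ℝ) := by
    rw [rpow_two, div_pow, sq_sqrt hn.le]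
  have hbase : (√a + √n) / √n ≤ rexp (√a / √n) := by
    rw [add_div, div_self hsn.ne']
    exact add_one_le_exp _
  calc ((√a + √n) ^ 2 / n) ^ (n / 2) * rexp (-((√a + √n) ^ 2 - n) / 2)
      = ((√a + √n) / √n) ^ n * rexp (-((√a + √n) ^ 2 - n) / 2) := by
        rw [hratio, ← rpow_mul (by positivity)]
        ring_nf
    _ ≤ rexp (√a / √n) ^ n * rexp (-((√a + √n) ^ 2 - n) / 2) := by
        gcongr
    _ = rexp (-a / 2) := by
        rw [← exp_mul, ← Real.exp_add]
        congr 1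
        field_simp
        rw [add_sq, sq_sqrt ha, sq_sqrt hn.le]
        linear_combination (-2 * √a) * sq_sqrt hn.le

theorem norm_sum_ofReal_mul_le {ι : Type*} (s : Finset ι) {w : ι → ℝ} {v : ι → ℂ} {M : ℝ}
    (hw : ∀ j, 0 ≤ w j) (hw1 : ∑ j ∈ s, w j ≤ 1) (hM : 0 ≤ M) (hv : ∀ j, ‖v j‖ ≤ M) :
    ‖∑ j ∈ s, (w j : ℂ) * v j‖ ≤ M :=
  calc ‖∑ j ∈ s, (w j : ℂ) * v j‖
      ≤ ∑ j ∈ s, w j * M := by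
        refine (norm_sum_le _ _).trans (Finset.sum_le_sum fun j _ => ?_)
        rw [norm_mul, norm_real, Real.norm_of_nonneg (hw j)]
        exact mul_le_mul_of_nonneg_left (hv j) (hw j)
    _ = (∑ j ∈ s, w j) * M := (Finset.sum_mul ..).symm
    _ ≤ M := mul_le_of_le_one_left hM hw1

section GaussianIntegrals

variable {V : Type*} [NormedAddCommGroup V] [InnerProductSpace ℝ V]

theorem ofReal_exp_mul_cexp_inner_eq (σ : ℝ) (u z : V) :
    (rexp (-σ ^ 2 * ‖z‖ ^ 2 / 2) : ℂ) * cexp ((⟪u, z⟫ : ℝ) * I) =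
      cexp (-((σ ^ 2 / 2 : ℝ) : ℂ) * ‖z‖ ^ 2 + I * (⟪u, z⟫ : ℝ)) := by
  rw [ofReal_exp, ← Complex.exp_add]
  push_cast
  ring_nf

theorem norm_ofReal_exp_mul_cexp_inner (σ : ℝ) (u z : V) :
    ‖(rexp (-σ ^ 2 * ‖z‖ ^ 2 / 2) : ℂ) * cexp ((⟪u, z⟫ : ℝ) * I)‖ =
      rexp (-σ ^ 2 * ‖z‖ ^ 2 / 2) := by
  rw [norm_mul, norm_real, norm_exp_ofReal_mul_I, mul_one, Real.norm_eq_abs, abs_exp]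

variable [MeasurableSpace V]

theorem norm_integral_ofReal_exp_mul_cexp_inner_le (σ : ℝ) (u : V) (μ : Measure V) :
    ‖∫ z, (rexp (-σ ^ 2 * ‖z‖ ^ 2 / 2) : ℂ) * cexp ((⟪u, z⟫ : ℝ) * I) ∂μ‖ ≤
      ∫ z, rexp (-σ ^ 2 * ‖z‖ ^ 2 / 2) ∂μ :=
  (norm_integral_le_integral_norm _).trans_eq
    (integral_congr_ae (.of_forall fun z => norm_ofReal_exp_mul_cexp_inner σ u z))

variable [FiniteDimensional ℝ V] [BorelSpace V]

theorem integrable_rexp_neg_mul_sq_norm {b : ℝ} (hb : 0 < b) :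
    Integrable (fun z : V => rexp (-b * ‖z‖ ^ 2)) :=
  Integrable.of_integral_ne_zero <| by
    rw [GaussianFourier.integral_rexp_neg_mul_sq_norm hb]; positivity

theorem setIntegral_compl_closedBall_rexp_neg_mul_sq_norm_le {a b R : ℝ} (hb : 0 < b)
    (hba : b ≤ a) (hR : 0 ≤ R) :
    ∫ z in (closedBall (0 : V) R)ᶜ, rexp (-a * ‖z‖ ^ 2) ≤
      rexp (-(a - b) * R ^ 2) * (π / b) ^ (finrank ℝ V / 2 : ℝ) := by
  have hpt : ∀ z ∈ (closedBall (0 : V) R)ᶜ,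
      rexp (-a * ‖z‖ ^ 2) ≤ rexp (-(a - b) * R ^ 2) * rexp (-b * ‖z‖ ^ 2) := by
    intro z hz
    rw [Set.mem_compl_iff, mem_closedBall, dist_zero_right, not_le] at hz
    have hRz : (a - b) * R ^ 2 ≤ (a - b) * ‖z‖ ^ 2 :=
      mul_le_mul_of_nonneg_left (pow_le_pow_left₀ hR hz.le 2) (sub_nonneg.2 hba)
    rw [← Real.exp_add, exp_le_exp]
    linarith
  have hint := (integrable_rexp_neg_mul_sq_norm (V := V) hb).const_mul (rexp (-(a - b) * R ^ 2))
  calc ∫ z in (closedBall (0 : V) R)ᶜ, rexp (-a * ‖z‖ ^ 2)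
      ≤ ∫ z in (closedBall (0 : V) R)ᶜ, rexp (-(a - b) * R ^ 2) * rexp (-b * ‖z‖ ^ 2) :=
        setIntegral_mono_on (integrable_rexp_neg_mul_sq_norm (hb.trans_le hba)).integrableOn
          hint.integrableOn measurableSet_closedBall.compl hpt
    _ ≤ ∫ z, rexp (-(a - b) * R ^ 2) * rexp (-b * ‖z‖ ^ 2) :=
        setIntegral_le_integral hint (.of_forall fun _ => by positivity)
    _ = _ := by rw [integral_const_mul, GaussianFourier.integral_rexp_neg_mul_sq_norm hb]

theorem ofReal_sq_half_re_pos {σ : ℝ} (hσ : σ ≠ 0) : 0 < ((σ ^ 2 / 2 : ℝ) : ℂ).re := by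
  rw [ofReal_re]
  exact half_pos (sq_pos_of_ne_zero hσ)

theorem integrable_ofReal_exp_mul_cexp_inner {σ : ℝ} (hσ : σ ≠ 0) (u : V) :
    Integrable fun z : V => (rexp (-σ ^ 2 * ‖z‖ ^ 2 / 2) : ℂ) * cexp ((⟪u, z⟫ : ℝ) * I) := by
  simp_rw [ofReal_exp_mul_cexp_inner_eq]
  exact GaussianFourier.integrable_cexp_neg_mul_sq_norm_add (ofReal_sq_half_re_pos hσ) _ u

theorem integral_ofReal_exp_mul_cexp_inner {σ : ℝ} (hσ : σ ≠ 0) (u : V) :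
    ∫ z : V, (rexp (-σ ^ 2 * ‖z‖ ^ 2 / 2) : ℂ) * cexp ((⟪u, z⟫ : ℝ) * I) =
      (((2 * π / σ ^ 2) ^ (finrank ℝ V / 2 : ℝ) * rexp (-‖u‖ ^ 2 / (2 * σ ^ 2)) : ℝ) : ℂ) := by
  simp_rw [ofReal_exp_mul_cexp_inner_eq]
  rw [GaussianFourier.integral_cexp_neg_mul_sq_norm_add (ofReal_sq_half_re_pos hσ),
    ofReal_mul, ofReal_cpow (by positivity), ofReal_exp]
  have hσ' : (σ : ℂ) ≠ 0 := ofReal_ne_zero.2 hσ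
  congr 2
  · push_cast; field_simp
  · push_cast; rfl
  · rw [I_sq]; push_cast; field_simp; ring

theorem two_pi_rpow_neg_mul_setIntegral_compl_closedBall_le (hV : 0 < finrank ℝ V) {a σ : ℝ}
    (ha : 0 ≤ a) (hσ : 0 < σ) :
    (2 * π) ^ (-(finrank ℝ V : ℝ)) *
        ∫ z in (closedBall (0 : V) ((√a + √(finrank ℝ V)) / σ))ᶜ, rexp (-σ ^ 2 * ‖z‖ ^ 2 / 2) ≤
      (2 * π * σ ^ 2) ^ (-(finrank ℝ V : ℝ) / 2) * rexp (-a / 2) := by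
  set n : ℝ := (finrank ℝ V : ℝ)
  have hn : 0 < n := Nat.cast_pos.2 hV
  set s := (√a + √n) ^ 2 with hs
  have hns : n ≤ s :=
    calc n = √n ^ 2 := (sq_sqrt hn.le).symm
      _ ≤ s := pow_le_pow_left₀ (sqrt_nonneg n) (le_add_of_nonneg_left (sqrt_nonneg a)) 2
  have hs0 : 0 < s := hn.trans_le hns
  have htail := setIntegral_compl_closedBall_rexp_neg_mul_sq_norm_le (V := V)
    (a := σ ^ 2 / 2) (b := n * σ ^ 2 / (2 * s)) (R := (√a + √n) / σ) (by positivity)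
    (by rw [div_le_div_iff₀ (by positivity) (by positivity)]; nlinarith [sq_pos_of_pos hσ])
    (by positivity)
  have hexp : -(σ ^ 2 / 2 - n * σ ^ 2 / (2 * s)) * ((√a + √n) / σ) ^ 2 = -(s - n) / 2 := by
    rw [div_pow, ← hs]
    field_simp
  have hbase : π / (n * σ ^ 2 / (2 * s)) = 2 * π / σ ^ 2 * (s / n) := by
    field_simp
  rw [hexp, hbase] at htail
  have hform : ∀ z : V, -σ ^ 2 * ‖z‖ ^ 2 / 2 = -(σ ^ 2 / 2) * ‖z‖ ^ 2 := fun z => by ring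
  simp_rw [hform]
  calc (2 * π) ^ (-n) *
        ∫ z in (closedBall (0 : V) ((√a + √n) / σ))ᶜ, rexp (-(σ ^ 2 / 2) * ‖z‖ ^ 2)
      ≤ (2 * π) ^ (-n) * (rexp (-(s - n) / 2) * (2 * π / σ ^ 2 * (s / n)) ^ (n / 2)) := by
        gcongr
    _ = (2 * π * σ ^ 2) ^ (-n / 2) * ((s / n) ^ (n / 2) * rexp (-(s - n) / 2)) := by
        rw [mul_rpow (x := 2 * π / σ ^ 2) (by positivity) (by positivity),
          ← two_pi_rpow_neg_mul_div_rpow n (by positivity)]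
        ring
    _ ≤ (2 * π * σ ^ 2) ^ (-n / 2) * rexp (-a / 2) := by
        gcongr
        exact sqrt_add_sq_div_rpow_mul_exp_le ha hn

end GaussianIntegrals

section GaussianDensity

variable {d : ℕ} {σ : ℝ}

theorem ofReal_gaussDensity_eq_integral (hσ : σ ≠ 0) (u : EuclideanSpace ℝ (Fin d)) :
    (gaussDensity d σ u : ℂ) = (((2 * π) ^ (-(d : ℝ)) : ℝ) : ℂ) *
      ∫ z, (rexp (-σ ^ 2 * ‖z‖ ^ 2 / 2) : ℂ) * cexp ((⟪u, z⟫ : ℝ) * I) := by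
  rw [integral_ofReal_exp_mul_cexp_inner hσ, finrank_euclideanSpace_fin, ← ofReal_mul,
    ← mul_assoc, two_pi_rpow_neg_mul_div_rpow _ (sq_pos_of_ne_zero hσ), gaussDensity]

theorem ofReal_gaussDensity_sub_setIntegral (hσ : σ ≠ 0) {S : Set (EuclideanSpace ℝ (Fin d))}
    (hS : MeasurableSet S) (u : EuclideanSpace ℝ (Fin d)) :
    (gaussDensity d σ u : ℂ) - (((2 * π) ^ (-(d : ℝ)) : ℝ) : ℂ) *
        ∫ z in S, (rexp (-σ ^ 2 * ‖z‖ ^ 2 / 2) : ℂ) * cexp ((⟪u, z⟫ : ℝ) * I) =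
      (((2 * π) ^ (-(d : ℝ)) : ℝ) : ℂ) *
        ∫ z in Sᶜ, (rexp (-σ ^ 2 * ‖z‖ ^ 2 / 2) : ℂ) * cexp ((⟪u, z⟫ : ℝ) * I) := by
  rw [ofReal_gaussDensity_eq_integral hσ,
    ← integral_add_compl hS (integrable_ofReal_exp_mul_cexp_inner hσ u)]
  ring

theorem norm_sum_mul_gaussDensity_sub_setIntegral_le {ι : Type*} [Fintype ι] (hσ : σ ≠ 0)
    {S : Set (EuclideanSpace ℝ (Fin d))} (hS : MeasurableSet S)
    (y : ι → EuclideanSpace ℝ (Fin d)) {w : ι → ℝ} (hw : ∀ j, 0 ≤ w j) (hw1 : ∑ j, w j ≤ 1)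
    (x : EuclideanSpace ℝ (Fin d)) :
    ‖((∑ j, w j * gaussDensity d σ (x - y j) : ℝ) : ℂ) -
        (((2 * π) ^ (-(d : ℝ)) : ℝ) : ℂ) * ∑ j, (w j : ℂ) *
          ∫ z in S, (rexp (-σ ^ 2 * ‖z‖ ^ 2 / 2) : ℂ) * cexp ((⟪x - y j, z⟫ : ℝ) * I)‖ ≤
      (2 * π) ^ (-(d : ℝ)) * ∫ z in Sᶜ, rexp (-σ ^ 2 * ‖z‖ ^ 2 / 2) := by
  have hc : 0 ≤ (2 * π) ^ (-(d : ℝ)) := by positivity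
  calc _ = ‖∑ j, (w j : ℂ) * ((((2 * π) ^ (-(d : ℝ)) : ℝ) : ℂ) *
          ∫ z in Sᶜ, (rexp (-σ ^ 2 * ‖z‖ ^ 2 / 2) : ℂ) * cexp ((⟪x - y j, z⟫ : ℝ) * I))‖ := by
        simp only [ofReal_sum, ofReal_mul, Finset.mul_sum, ← Finset.sum_sub_distrib]
        refine congrArg _ (Finset.sum_congr rfl fun j _ => ?_)
        rw [← ofReal_gaussDensity_sub_setIntegral hσ hS]
        ring
    _ ≤ _ := by
        refine norm_sum_ofReal_mul_le _ hw hw1 (by positivity) fun j => ?_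
        rw [norm_mul, norm_real, Real.norm_of_nonneg hc]
        exact mul_le_mul_of_nonneg_left (norm_integral_ofReal_exp_mul_cexp_inner_le σ _ _) hc

end GaussianDensity

theorem truncated_fourier_representation_general (d k k₀ : ℕ) (hd : 1 ≤ d) (hk : 2 ≤ k)
    (C : ℝ) (hC : 0 < C) (Δ : ℝ) (hΔ : 0 < Δ)
    (y : Fin k₀ → EuclideanSpace ℝ (Fin d))
    (w : Fin k₀ → ℝ) (hw : ∀ j, 0 ≤ w j) (hw1 : ∑ j, w j = 1)
    (x : EuclideanSpace ℝ (Fin d)) :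
    ‖((∑ j : Fin k₀, w j * gaussDensity d Δ (x - y j) : ℝ) : ℂ) -
          ((2 * π : ℝ) ^ (-(d : ℝ)) : ℝ) * ∑ j : Fin k₀, (w j : ℂ) *
            ∫ z in Metric.closedBall (0 : EuclideanSpace ℝ (Fin d))
                ((Real.sqrt (C * Real.log k) + Real.sqrt d) / Δ),
              (Real.exp (-Δ ^ 2 * ‖z‖ ^ 2 / 2) : ℂ) *
                Complex.exp ((⟪x - y j, z⟫ : ℝ) * Complex.I)‖ ≤
        (2 * π) ^ (-(d : ℝ)) *
          ∫ z in (Metric.closedBall (0 : EuclideanSpace ℝ (Fin d))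
              ((Real.sqrt (C * Real.log k) + Real.sqrt d) / Δ))ᶜ,
            Real.exp (-Δ ^ 2 * ‖z‖ ^ 2 / 2) ∧
      (2 * π) ^ (-(d : ℝ)) *
          (∫ z in (Metric.closedBall (0 : EuclideanSpace ℝ (Fin d))
              ((Real.sqrt (C * Real.log k) + Real.sqrt d) / Δ))ᶜ,
            Real.exp (-Δ ^ 2 * ‖z‖ ^ 2 / 2)) ≤
        (2 * π * Δ ^ 2) ^ (-(d : ℝ) / 2) * (k : ℝ) ^ (-C / 2) := by
  refine ⟨norm_sum_mul_gaussDensity_sub_setIntegral_le hΔ.ne' measurableSet_closedBall y hw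
    hw1.le x, ?_⟩
  have hk0 : (0 : ℝ) < k := by positivity
  have hlogk : 0 ≤ C * Real.log k :=
    mul_nonneg hC.le (Real.log_nonneg (by exact_mod_cast (by omega : 1 ≤ k)))
  have htail := two_pi_rpow_neg_mul_setIntegral_compl_closedBall_le
    (V := EuclideanSpace ℝ (Fin d)) (by rw [finrank_euclideanSpace_fin]; omega) hlogk hΔ
  rw [finrank_euclideanSpace_fin] at htail
  rwa [rpow_def_of_pos hk0, show Real.log k * (-C / 2) = -(C * Real.log k) / 2 by ring]

/-- For a discrete measure `ν = Σ_j w_j δ_{y_j}` and the Euclidean ball `B` of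
radius `(√(C ln k)+√d)/Δ̄` centered at `0`, for every `x`:
`|(γ_{Δ̄} ⋆ ν)(x) − (2π)^(-d) Σ_j w_j ∫_B e^(-Δ̄²‖z‖²/2) e^(i⟨x−y_j,z⟩) dz|
  ≤ (2π)^(-d) ∫_{ℝ^d∖B} e^(-Δ̄²‖z‖²/2) dz ≤ (2πΔ̄²)^(-d/2)·k^(-C/2)`. -/
theorem truncated_fourier_representation (d k k₀ : ℕ) (hd : 1 ≤ d) (hk : 2 ≤ k)
    (C : ℝ) (hC : 0 < C) (Δ : ℝ) (hΔ : 0 < Δ) (hΔ1 : Δ < 1)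
    (y : Fin k₀ → EuclideanSpace ℝ (Fin d))
    (w : Fin k₀ → ℝ) (hw : ∀ j, 0 ≤ w j) (hw1 : ∑ j, w j = 1)
    (x : EuclideanSpace ℝ (Fin d)) :
    ‖((∑ j : Fin k₀, w j * gaussDensity d Δ (x - y j) : ℝ) : ℂ) -
          ((2 * π : ℝ) ^ (-(d : ℝ)) : ℝ) * ∑ j : Fin k₀, (w j : ℂ) *
            ∫ z in Metric.closedBall (0 : EuclideanSpace ℝ (Fin d))
                ((Real.sqrt (C * Real.log k) + Real.sqrt d) / Δ),
              (Real.exp (-Δ ^ 2 * ‖z‖ ^ 2 / 2) : ℂ) *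
                Complex.exp ((⟪x - y j, z⟫ : ℝ) * Complex.I)‖ ≤
        (2 * π) ^ (-(d : ℝ)) *
          ∫ z in (Metric.closedBall (0 : EuclideanSpace ℝ (Fin d))
              ((Real.sqrt (C * Real.log k) + Real.sqrt d) / Δ))ᶜ,
            Real.exp (-Δ ^ 2 * ‖z‖ ^ 2 / 2) ∧
      (2 * π) ^ (-(d : ℝ)) *
          (∫ z in (Metric.closedBall (0 : EuclideanSpace ℝ (Fin d))
              ((Real.sqrt (C * Real.log k) + Real.sqrt d) / Δ))ᶜ,
            Real.exp (-Δ ^ 2 * ‖z‖ ^ 2 / 2)) ≤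
        (2 * π * Δ ^ 2) ^ (-(d : ℝ) / 2) * (k : ℝ) ^ (-C / 2) :=
  truncated_fourier_representation_general d k k₀ hd hk C hC Δ hΔ y w hw hw1 x
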